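/- arXiv:1808.10364 — 8 statements merged into one kernel-verified Lean document; each statement's English description precedes it below -/
import Mathlib

section
/- The drawing produced by Algorithm PCH-Draw on a DAG G with n vertices and a path decomposition into k paths fits within a grid of height n−1 and width 2k−1; hence its area is O(kn). -/
/-- The drawing produced by PCH-Draw on a DAG with `n` vertices and a
path decomposition into `k` paths fits in a grid of width `2k-1` (x-coordinates
between `2` and `2k`) and height `n-1` (y-coordinates between `0` and `n-1`);
hence its area is O(kn). All vertex points and all bend points lie in this grid. -/
theorem stmt3 {V : Type*} [Fintype V] {k n : ℕ} (E : V → V → Prop)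
    (hn : Fintype.card V = n)
    (idx : V → Fin k) (T : V → ℕ)
    (hT : ∀ v, T v ≤ n - 1)
    (htopo : ∀ u v, E u v → T u < T v)
    (x : V → ℤ) (hx : ∀ v, x v = 2 * (((idx v : ℕ) : ℤ) + 1))
    (A : V → V → Prop) (hA : ∀ u v, A u v → E u v)
    (bend : V → V → Option (ℤ × ℤ))
    (hbend : ∀ u v b, A u v → bend u v = some b →
      ((b.1 = x u + 1 ∧ x u < x v) ∨ (b.1 = x u - 1 ∧ x v < x u)) ∧ b.2 = (T v : ℤ) - 1) :
    (∀ v : V, 2 ≤ x v ∧ x v ≤ 2 * k ∧ 0 ≤ (T v : ℤ) ∧ (T v : ℤ) ≤ (n : ℤ) - 1) ∧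
    (∀ u v b, A u v → bend u v = some b →
      2 ≤ b.1 ∧ b.1 ≤ 2 * k ∧ 0 ≤ b.2 ∧ b.2 ≤ (n : ℤ) - 1) := by
  have hvert : ∀ v : V, 2 ≤ x v ∧ x v ≤ 2 * k ∧ 0 ≤ (T v : ℤ) ∧ (T v : ℤ) ≤ (n : ℤ) - 1 := by
    intro v
    have hn1 : 1 ≤ n := by
      rw [← hn]
      exact Fintype.card_pos_iff.mpr ⟨v⟩
    have hi : (idx v : ℕ) < k := (idx v).isLt
    have hTv := hT v
    have := hx v
    refine ⟨by omega, by omega, by positivity, by omega⟩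
  refine ⟨hvert, ?_⟩
  intro u v b hAuv hb
  obtain ⟨h1, h2⟩ := hbend u v b hAuv hb
  have hu := hvert u
  have hv := hvert v
  have hTlt : T u < T v := htopo u v (hA u v hAuv)
  have hTv : 0 < (T v : ℤ) := by exact_mod_cast Nat.pos_of_ne_zero (by omega)
  rcases h1 with ⟨he, hlt⟩ | ⟨he, hlt⟩ <;>
    refine ⟨by omega, by omega, by omega, by omega⟩
end

section
/- In the drawing produced by Algorithm PCH-Draw, a cross edge e = (u,v) that is drawn with one bend b_e at point (x(u)±1, y(v)−1) does not pass through any vertex other than u and v. -/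
/-- In the drawing produced by PCH-Draw, a cross edge `e = (u,v)`
drawn with one bend `b = (x u ± 1, T v - 1)` (the sign chosen toward `v`) does not
pass through any vertex other than `u` and `v`: no other vertex lies on either of
the two straight segments `(u,b)` and `(b,v)`. -/
theorem stmt5 {V : Type*} {k : ℕ} (E : V → V → Prop)
    (idx : V → Fin k) (T : V → ℕ) (hTinj : Function.Injective T)
    (x : V → ℤ) (hx : ∀ v, x v = 2 * (((idx v : ℕ) : ℤ) + 1))
    (u v : V) (hE : E u v) (hcross : idx u ≠ idx v) (hT : T u < T v)
    (b : ℤ × ℤ)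
    (hb1 : (x u < x v ∧ b.1 = x u + 1) ∨ (x v < x u ∧ b.1 = x u - 1))
    (hb2 : b.2 = (T v : ℤ) - 1) :
    ∀ w : V, w ≠ u → w ≠ v →
      (((x w : ℝ), (T w : ℝ)) ∉ segment ℝ ((x u : ℝ), (T u : ℝ)) ((b.1 : ℝ), (b.2 : ℝ))) ∧
      (((x w : ℝ), (T w : ℝ)) ∉ segment ℝ ((b.1 : ℝ), (b.2 : ℝ)) ((x v : ℝ), (T v : ℝ))) := by
  intro w hwu hwv
  have hxu := hx u
  have hxw := hx w
  constructor
  · intro hmem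
    rw [segment_eq_image] at hmem
    obtain ⟨t, ⟨ht0, ht1⟩, heq⟩ := hmem
    simp only [Prod.smul_mk, Prod.mk_add_mk, Prod.mk.injEq, smul_eq_mul] at heq
    obtain ⟨h1, h2⟩ := heq
    -- x-coordinate forces t = 0
    have ht : t = 0 := by
      rcases hb1 with ⟨_, hb⟩ | ⟨_, hb⟩
      · have hb' : (b.1 : ℝ) = (x u : ℝ) + 1 := by exact_mod_cast hb
        have h1' : (x w : ℝ) = (x u : ℝ) + t := by rw [hb'] at h1; ring_nf at h1 ⊢; linarith
        have hdiff : ((x w - x u : ℤ) : ℝ) = t := by push_cast; linarith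
        have h01 : (0 : ℤ) ≤ x w - x u ∧ x w - x u ≤ 1 := by
          constructor <;> [exact_mod_cast hdiff ▸ ht0; exact_mod_cast hdiff ▸ ht1]
        have : x w - x u = 0 := by omega
        have : ((x w - x u : ℤ) : ℝ) = 0 := by exact_mod_cast this
        linarith [hdiff]
      · have hb' : (b.1 : ℝ) = (x u : ℝ) - 1 := by exact_mod_cast hb
        have h1' : (x w : ℝ) = (x u : ℝ) - t := by rw [hb'] at h1; ring_nf at h1 ⊢; linarith
        have hdiff : ((x u - x w : ℤ) : ℝ) = t := by push_cast; linarith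
        have h01 : (0 : ℤ) ≤ x u - x w ∧ x u - x w ≤ 1 := by
          constructor <;> [exact_mod_cast hdiff ▸ ht0; exact_mod_cast hdiff ▸ ht1]
        have : x u - x w = 0 := by omega
        have : ((x u - x w : ℤ) : ℝ) = 0 := by exact_mod_cast this
        linarith [hdiff]
    subst ht
    have : (T w : ℝ) = (T u : ℝ) := by linarith [h2]
    have : T w = T u := by exact_mod_cast this
    exact hwu (hTinj this)
  · intro hmem
    rw [segment_eq_image] at hmem
    obtain ⟨t, ⟨ht0, ht1⟩, heq⟩ := hmem
    simp only [Prod.smul_mk, Prod.mk_add_mk, Prod.mk.injEq, smul_eq_mul] at heq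
    obtain ⟨h1, h2⟩ := heq
    have hb2' : (b.2 : ℝ) = (T v : ℝ) - 1 := by exact_mod_cast hb2
    -- y-coordinate: T w = T v - 1 + t
    have hy : (T w : ℝ) = (T v : ℝ) - 1 + t := by rw [hb2'] at h2; ring_nf at h2 ⊢; linarith
    have hTwle : (T w : ℤ) ≤ (T v : ℤ) := by
      have : (T w : ℝ) ≤ (T v : ℝ) := by linarith
      exact_mod_cast this
    have hTwne : T w ≠ T v := fun h => hwv (hTinj h)
    have hTwge : (T v : ℤ) - 1 ≤ (T w : ℤ) := by
      have : (T v : ℝ) - 1 ≤ (T w : ℝ) := by linarith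
      exact_mod_cast this
    have hTw : (T w : ℤ) = (T v : ℤ) - 1 := by
      have : (T w : ℤ) ≠ (T v : ℤ) := fun h => hTwne (by exact_mod_cast h)
      omega
    have ht : t = 0 := by
      have : (T w : ℝ) = (T v : ℝ) - 1 := by exact_mod_cast hTw
      linarith
    subst ht
    have hx1 : (x w : ℝ) = (b.1 : ℝ) := by linarith [h1]
    have hx1' : x w = b.1 := by exact_mod_cast hx1
    rcases hb1 with ⟨_, hb⟩ | ⟨_, hb⟩ <;> omega
end

section
/- Let e = (u,v) and e' = (u',v') be two cross edges drawn with a bend by Algorithm PCH-Draw. Their bend points coincide if and only if u and u' lie in the same decomposition path and v = v'. -/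
/-- Let `e = (u,v)` and `e' = (u',v')` be two cross edges drawn with a
bend by PCH-Draw, both bending on the same side (both tails left of their heads, or
both right). Their bend points coincide if and only if `u` and `u'` lie in the same
decomposition path and `v = v'`. -/
theorem stmt6 {V : Type*} {k : ℕ} (E : V → V → Prop)
    (idx : V → Fin k) (T : V → ℕ) (hTinj : Function.Injective T)
    (x : V → ℤ) (hx : ∀ w, x w = 2 * (((idx w : ℕ) : ℤ) + 1))
    (u v u' v' : V) (hE : E u v) (hE' : E u' v')
    (hc : idx u ≠ idx v) (hc' : idx u' ≠ idx v')
    (hside : (x u < x v ∧ x u' < x v') ∨ (x v < x u ∧ x v' < x u')) :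
    ((if x u < x v then x u + 1 else x u - 1, (T v : ℤ) - 1) =
     (if x u' < x v' then x u' + 1 else x u' - 1, (T v' : ℤ) - 1)) ↔
    (idx u = idx u' ∧ v = v') := by
  have key : idx u = idx u' ↔ x u = x u' := by
    constructor
    · intro h; rw [hx, hx, h]
    · intro h; rw [hx, hx] at h
      have : ((idx u : ℕ) : ℤ) = ((idx u' : ℕ) : ℤ) := by linarith
      exact Fin.ext (by exact_mod_cast this)
  constructor
  · intro h
    rw [Prod.ext_iff] at h
    obtain ⟨h1, h2⟩ := h
    simp only at h1 h2
    have hv : v = v' := hTinj (by exact_mod_cast (by linarith : ((T v : ℤ)) = T v'))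
    refine ⟨key.mpr ?_, hv⟩
    rcases hside with ⟨ha, hb⟩ | ⟨ha, hb⟩
    · rw [if_pos ha, if_pos hb] at h1; linarith
    · rw [if_neg (not_lt.mpr ha.le), if_neg (not_lt.mpr hb.le)] at h1; linarith
  · rintro ⟨h1, rfl⟩
    have hxx := key.mp h1
    refine Prod.ext ?_ rfl
    rcases hside with ⟨ha, hb⟩ | ⟨ha, hb⟩
    · rw [if_pos ha, if_pos hb, hxx]
    · rw [if_neg (not_lt.mpr ha.le), if_neg (not_lt.mpr hb.le), hxx]
end

section
/- Let H' be the graph obtained from the path decomposition graph H by removing, for each vertex v and each decomposition path P not containing v, all incoming cross edges (u,v) with u ∈ P except the one whose tail u is latest in the order of P. Then H' has the same reachability relation as G, and every edge of H that is removed is a transitive edge of G. -/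
/-!
Within a decomposition path every vertex reaches all later ones along consecutive edges, which
are never pruned. So a cross edge `(u, v)` can be replaced by the walk from `u` to the latest tail
`w` of a cross edge into `v` on the path of `u`, followed by the kept edge `(w, v)`; this gives the
reachability claim. If `(u, v)` was pruned, `w` lies strictly after `u`, and that same walk runs
inside the path of `u`, which does not contain `v`, so it avoids the edge `(u, v)`.
-/

open Relation

theorem List.IsChain.reflTransGen_getElem {α : Type*} {R : α → α → Prop} {l : List α}
    (h : l.IsChain R) {i j : ℕ} (hi : i < l.length) (hj : j < l.length) (hij : i ≤ j) :
    ReflTransGen R l[i] l[j] := by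
  rcases hij.eq_or_lt with rfl | hlt
  · exact .refl
  · exact List.pairwise_iff_getElem.1 (h.imp fun _ _ => .single).pairwise i j hi hj hlt

section PathDecomposition

variable {V : Type*} {k : ℕ} {P : Fin k → List V} {idx : V → Fin k} {pos : V → ℕ}

/-- The path decomposition graph `H`. -/
def pathDecompGraph (E : V → V → Prop) (idx : V → Fin k) (pos : V → ℕ) (u v : V) : Prop :=
  E u v ∧ (idx u ≠ idx v ∨ (idx u = idx v ∧ pos v = pos u + 1))

/-- The pruned graph `H'`. -/
def prunedPathDecompGraph (E : V → V → Prop) (idx : V → Fin k) (pos : V → ℕ) (u v : V) : Prop :=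
  pathDecompGraph E idx pos u v ∧
    (idx u = idx v ∨ ∀ u', pathDecompGraph E idx pos u' v → idx u' = idx u → pos u' ≤ pos u)

theorem idx_eq_of_mem
    (huniq : ∀ (i : Fin k) (n : ℕ) (v : V), (P i)[n]? = some v → i = idx v ∧ n = pos v)
    {i : Fin k} {v : V} (hv : v ∈ P i) : idx v = i := by
  obtain ⟨n, hn⟩ := List.mem_iff_getElem?.1 hv
  exact (huniq i n v hn).1.symm

theorem reflTransGen_of_pos_le (hmem : ∀ v, (P (idx v))[pos v]? = some v)
    {R : V → V → Prop} {a b : V} (hR : (P (idx a)).IsChain R) (hidx : idx a = idx b)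
    (hpos : pos a ≤ pos b) : ReflTransGen R a b := by
  have hb := hmem b
  rw [← hidx] at hb
  obtain ⟨ha, ha'⟩ := List.getElem?_eq_some_iff.1 (hmem a)
  obtain ⟨hb, hb'⟩ := List.getElem?_eq_some_iff.1 hb
  rw [← ha', ← hb']
  exact hR.reflTransGen_getElem ha hb hpos

theorem pos_lt_of_rel {E : V → V → Prop} (hacyc : ∀ v, ¬ TransGen E v v)
    (hpath : ∀ i, (P i).IsChain E) (hmem : ∀ v, (P (idx v))[pos v]? = some v)
    {a b : V} (hab : E a b) (hidx : idx a = idx b) : pos a < pos b := by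
  by_contra! hba
  exact hacyc b (TransGen.tail' (reflTransGen_of_pos_le hmem (hpath _) hidx.symm hba) hab)

theorem exists_forall_pos_le (hmem : ∀ v, (P (idx v))[pos v]? = some v) {S : Set V}
    {i : Fin k} (hS : ∃ w ∈ S, idx w = i) :
    ∃ w ∈ S, idx w = i ∧ ∀ w' ∈ S, idx w' = i → pos w' ≤ pos w := by
  have hfin : (S ∩ {w | idx w = i}).Finite :=
    (P i).finite_toSet.subset fun w hw => hw.2 ▸ List.mem_of_getElem? (hmem w)
  obtain ⟨w, ⟨hwS, hwi⟩, hmax⟩ := Set.exists_max_image _ pos hfin (hS.imp fun _ => id)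
  exact ⟨w, hwS, hwi, fun w' hw' hw'i => hmax w' ⟨hw', hw'i⟩⟩

variable {E : V → V → Prop}

theorem isChain_prunedPathDecompGraph (hpath : ∀ i, (P i).IsChain E)
    (huniq : ∀ (i : Fin k) (n : ℕ) (v : V), (P i)[n]? = some v → i = idx v ∧ n = pos v)
    (i : Fin k) : (P i).IsChain (prunedPathDecompGraph E idx pos) := by
  refine List.isChain_iff_getElem.2 fun n hn => ?_
  obtain ⟨hi, hpos⟩ := huniq i n _ (List.getElem?_eq_getElem (by omega))
  obtain ⟨hi', hpos'⟩ := huniq i (n + 1) _ (List.getElem?_eq_getElem hn)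
  have hidx := hi.symm.trans hi'
  exact ⟨⟨List.isChain_iff_getElem.1 (hpath i) n hn, .inr ⟨hidx, by omega⟩⟩, .inl hidx⟩

theorem reflTransGen_prunedPathDecompGraph_of_pathDecompGraph (hpath : ∀ i, (P i).IsChain E)
    (hmem : ∀ v, (P (idx v))[pos v]? = some v)
    (huniq : ∀ (i : Fin k) (n : ℕ) (v : V), (P i)[n]? = some v → i = idx v ∧ n = pos v)
    {u v : V} (huv : pathDecompGraph E idx pos u v) :
    ReflTransGen (prunedPathDecompGraph E idx pos) u v := by
  by_cases hidx : idx u = idx v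
  · exact .single ⟨huv, .inl hidx⟩
  obtain ⟨w, hwv, hwu, hmax⟩ :=
    exists_forall_pos_le hmem (S := {w | pathDecompGraph E idx pos w v}) ⟨u, huv, rfl⟩
  have hkept : prunedPathDecompGraph E idx pos w v :=
    ⟨hwv, .inr fun u' hu'v hu'w => hmax u' hu'v (hu'w.trans hwu)⟩
  have huw : ReflTransGen (prunedPathDecompGraph E idx pos) u w :=
    reflTransGen_of_pos_le hmem (isChain_prunedPathDecompGraph hpath huniq _) hwu.symm
      (hmax u huv rfl)
  exact huw.tail hkept

theorem reflTransGen_prunedPathDecompGraph_iff (hacyc : ∀ v, ¬ TransGen E v v)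
    (hpath : ∀ i, (P i).IsChain E) (hmem : ∀ v, (P (idx v))[pos v]? = some v)
    (huniq : ∀ (i : Fin k) (n : ℕ) (v : V), (P i)[n]? = some v → i = idx v ∧ n = pos v)
    {a b : V} : ReflTransGen (prunedPathDecompGraph E idx pos) a b ↔ ReflTransGen E a b := by
  refine ⟨ReflTransGen.mono (fun _ _ h => h.1.1) a b, reflTransGen_closed (fun c d hcd => ?_) a b⟩
  by_cases hidx : idx c = idx d
  · exact reflTransGen_of_pos_le hmem (isChain_prunedPathDecompGraph hpath huniq _) hidx
      (pos_lt_of_rel hacyc hpath hmem hcd hidx).le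
  · exact reflTransGen_prunedPathDecompGraph_of_pathDecompGraph hpath hmem huniq ⟨hcd, .inl hidx⟩

theorem transGen_of_not_prunedPathDecompGraph (hpath : ∀ i, (P i).IsChain E)
    (hmem : ∀ v, (P (idx v))[pos v]? = some v)
    (huniq : ∀ (i : Fin k) (n : ℕ) (v : V), (P i)[n]? = some v → i = idx v ∧ n = pos v)
    {u v : V} (huv : pathDecompGraph E idx pos u v)
    (hpruned : ¬ prunedPathDecompGraph E idx pos u v) :
    TransGen (fun a b => E a b ∧ ¬(a = u ∧ b = v)) u v := by
  simp only [prunedPathDecompGraph, huv, true_and, not_or, not_forall, not_le] at hpruned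
  obtain ⟨hidx, u', hu'v, hu'u, hlt⟩ := hpruned
  have hchain : (P (idx u)).IsChain (fun a b => E a b ∧ ¬(a = u ∧ b = v)) :=
    (hpath _).imp_of_mem_imp fun a b _ hb hab =>
      ⟨hab, fun ⟨_, hbv⟩ => hidx (hbv ▸ idx_eq_of_mem huniq hb).symm⟩
  exact TransGen.tail' (reflTransGen_of_pos_le hmem hchain hu'u.symm hlt.le)
    ⟨hu'v.1, fun ⟨hu'_eq, _⟩ => hlt.ne (hu'_eq ▸ rfl)⟩

end PathDecomposition

/-- Let `H'` (edge relation `A'`) be obtained from the path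
decomposition graph `H` (edge relation `A`) by keeping, for each vertex `v` and
each decomposition path, only the incoming cross edge whose tail is latest in the
order of that path. Then `H'` has the same reachability relation as `G`, and every
removed edge of `H` is a transitive edge of `G`. -/
theorem stmt7 {V : Type*} {k : ℕ} (E : V → V → Prop)
    (P : Fin k → List V)
    (hacyc : ∀ v, ¬ Relation.TransGen E v v)
    (hpath : ∀ i, List.Chain' E (P i))
    (idx : V → Fin k) (pos : V → ℕ)
    (hmem : ∀ v, (P (idx v))[pos v]? = some v)
    (huniq : ∀ (i : Fin k) (n : ℕ) (v : V), (P i)[n]? = some v → i = idx v ∧ n = pos v)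
    (A A' : V → V → Prop)
    (hA : ∀ u v, A u v ↔ E u v ∧ (idx u ≠ idx v ∨ (idx u = idx v ∧ pos v = pos u + 1)))
    (hA' : ∀ u v, A' u v ↔
      A u v ∧ (idx u = idx v ∨ ∀ u', A u' v → idx u' = idx u → pos u' ≤ pos u)) :
    (∀ a b, Relation.ReflTransGen A' a b ↔ Relation.ReflTransGen E a b) ∧
    (∀ u v, A u v → ¬ A' u v →
      Relation.TransGen (fun a b => E a b ∧ ¬(a = u ∧ b = v)) u v) := by
  obtain rfl : A = pathDecompGraph E idx pos := funext₂ fun u v => propext (hA u v)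
  obtain rfl : A' = prunedPathDecompGraph E idx pos := funext₂ fun u v => propext (hA' u v)
  exact ⟨fun _ _ => reflTransGen_prunedPathDecompGraph_iff hacyc hpath hmem huniq,
    fun _ _ => transGen_of_not_prunedPathDecompGraph hpath hmem huniq⟩
end

section
/- The restriction of the channel decomposition S_c of a DAG G to the compressed transitive closure graph Q is a path decomposition of Q: each channel of S_c, with its channel order, forms a directed path in Q. -/
/-!
Within a channel, `cpos` is injective and its values are downward closed, so the vertices of
channel `i` sit at exactly the positions `0, …, nᵢ - 1`; listing them by position gives a list
whose `j`-th entry is the vertex of position `j`. Consecutive entries are then consecutive in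
their channel, and such pairs are edges of `Q`.
-/

/-- `v` is the earliest vertex of its channel (in channel order `cpos`, channels
given by `cidx`) reachable from `u` by a nontrivial directed path. -/
def Earliest {V : Type*} {k : ℕ} (E : V → V → Prop)
    (cidx : V → Fin k) (cpos : V → ℕ) (u v : V) : Prop :=
  Relation.TransGen E u v ∧
    ∀ w, cidx w = cidx v → Relation.TransGen E u w → cpos v ≤ cpos w

/-- Edge `(u,v)` of the compressed transitive closure graph `Q`: `v` is the earliest
vertex of its channel reachable from `u`, and `u` is the latest vertex in the order
of its own channel with that property. -/
def QEdge {V : Type*} {k : ℕ} (E : V → V → Prop)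
    (cidx : V → Fin k) (cpos : V → ℕ) (u v : V) : Prop :=
  Earliest E cidx cpos u v ∧
    ∀ u', cidx u' = cidx u → Earliest E cidx cpos u' v → cpos u' ≤ cpos u

namespace Finset

variable {α : Type*} {s : Finset α} {f : α → ℕ}

theorem image_eq_range_card (hinj : Set.InjOn f s)
    (hdown : ∀ a ∈ s, ∀ j < f a, ∃ b ∈ s, f b = j) :
    s.image f = range s.card := by
  symm
  refine eq_of_subset_of_card_le (fun j hj => ?_) (by rw [card_image_of_injOn hinj, card_range])
  by_contra hmiss
  have hbelow : s.image f ⊆ range j := by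
    intro m hm
    obtain ⟨a, ha, rfl⟩ := mem_image.1 hm
    refine mem_range.2 (lt_of_not_ge fun hge => hmiss ?_)
    obtain ⟨b, hb, hbj⟩ :=
      (eq_or_lt_of_le hge).elim (fun h => ⟨a, ha, h.symm⟩) (hdown a ha j)
    exact mem_image.2 ⟨b, hb, hbj⟩
  have := card_le_card hbelow
  rw [card_image_of_injOn hinj, card_range] at this
  exact absurd (mem_range.1 hj) (not_lt.2 this)

theorem exists_list_getElem?_eq_some_iff (hinj : Set.InjOn f s)
    (hdown : ∀ a ∈ s, ∀ j < f a, ∃ b ∈ s, f b = j) :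
    ∃ l : List α, ∀ j a, l[j]? = some a ↔ a ∈ s ∧ f a = j := by
  have hrange := image_eq_range_card hinj hdown
  have hpos : ∀ j, j < s.card ↔ ∃ a ∈ s, f a = j := fun j => by
    rw [← mem_range, ← hrange, mem_image]
  choose g hg using fun j : Fin s.card => (hpos j).1 j.2
  refine ⟨List.ofFn g, fun j a => ?_⟩
  rw [List.getElem?_ofFn]
  split_ifs with hj
  · rw [Option.some_inj]
    constructor
    · rintro rfl
      exact hg _
    · rintro ⟨ha, rfl⟩
      exact hinj (hg _).1 ha (hg _).2
  · exact iff_of_false not_false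
      fun ⟨ha, haj⟩ => hj ((hpos j).2 ⟨a, ha, haj⟩)

end Finset

theorem List.isChain_of_getElem?_eq_some_iff {α : Type*} {l : List α} {P : α → Prop}
    {f : α → ℕ} {R : α → α → Prop} (hl : ∀ j a, l[j]? = some a ↔ P a ∧ f a = j)
    (hR : ∀ a b, P a → P b → f b = f a + 1 → R a b) : l.IsChain R := by
  rw [List.isChain_iff_getElem]
  intro i hi
  obtain ⟨hPi, hfi⟩ := (hl i l[i]).1 (List.getElem?_eq_getElem _)
  obtain ⟨hPs, hfs⟩ := (hl (i + 1) l[i + 1]).1 (List.getElem?_eq_getElem _)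
  exact hR _ _ hPi hPs (by rw [hfi, hfs])

theorem qEdge_of_cpos_eq_succ {V : Type*} {k : ℕ} {E : V → V → Prop}
    {cidx : V → Fin k} {cpos : V → ℕ}
    (hchan : ∀ a b, cidx a = cidx b → (cpos a < cpos b ↔ Relation.TransGen E a b))
    {u w : V} (hcc : cidx u = cidx w) (hsucc : cpos w = cpos u + 1) :
    QEdge E cidx cpos u w := by
  refine ⟨⟨(hchan u w hcc).1 (by omega), fun x hx hux => ?_⟩, fun u' hu' hu'w => ?_⟩
  · have := (hchan u x (hcc.trans hx.symm)).2 hux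
    omega
  · have := (hchan u' w (hu'.trans hcc)).2 hu'w.1
    omega

theorem stmt13_general {V : Type*} [Fintype V] {k : ℕ} (E : V → V → Prop)
    (cidx : V → Fin k) (cpos : V → ℕ)
    (hchan : ∀ a b, cidx a = cidx b → (cpos a < cpos b ↔ Relation.TransGen E a b))
    (hinj : ∀ a b, cidx a = cidx b → cpos a = cpos b → a = b)
    (hinit : ∀ v, ∀ j < cpos v, ∃ u, cidx u = cidx v ∧ cpos u = j) :
    ∃ S : Fin k → List V,
      (∀ v : V, ∃! p : Fin k × ℕ, (S p.1)[p.2]? = some v) ∧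
      (∀ i, List.Chain' (QEdge E cidx cpos) (S i)) ∧
      (∀ i v, v ∈ S i → cidx v = i) ∧
      (∀ v : V, (S (cidx v))[cpos v]? = some v) := by
  classical
  choose S hS using fun i : Fin k =>
    Finset.exists_list_getElem?_eq_some_iff (s := Finset.univ.filter (cidx · = i)) (f := cpos)
      (fun a ha b hb hab => by
        simp only [Finset.mem_coe, Finset.mem_filter, Finset.mem_univ, true_and] at ha hb
        exact hinj a b (ha.trans hb.symm) hab)
      (fun a ha j hj => by
        obtain ⟨b, hb, hbj⟩ := hinit a j hj
        exact ⟨b, by simpa [hb] using ha, hbj⟩)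
  simp only [Finset.mem_filter, Finset.mem_univ, true_and] at hS
  refine ⟨S, fun v => ⟨(cidx v, cpos v), (hS _ _ _).2 ⟨rfl, rfl⟩, ?_⟩, fun i => ?_,
    fun i v hv => ?_, fun v => (hS _ _ _).2 ⟨rfl, rfl⟩⟩
  · rintro ⟨i, j⟩ hij
    obtain ⟨rfl, rfl⟩ := (hS i j v).1 hij
    rfl
  · exact List.isChain_of_getElem?_eq_some_iff (hS i)
      fun a b ha hb hab => qEdge_of_cpos_eq_succ hchan (ha.trans hb.symm) hab
  · obtain ⟨j, hj⟩ := List.mem_iff_getElem?.1 hv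
    exact ((hS i j v).1 hj).1

/-- The restriction of the channel decomposition to the compressed
transitive closure graph `Q` is a path decomposition of `Q`: the channels, each read
in its channel order, form vertex-disjoint directed paths of `Q` partitioning `V`. -/
theorem stmt13 {V : Type*} [Fintype V] {k : ℕ} (E : V → V → Prop)
    (cidx : V → Fin k) (cpos : V → ℕ)
    (hacyc : ∀ v, ¬ Relation.TransGen E v v)
    (hchan : ∀ a b, cidx a = cidx b → (cpos a < cpos b ↔ Relation.TransGen E a b))
    (hinj : ∀ a b, cidx a = cidx b → cpos a = cpos b → a = b)
    (hinit : ∀ v, ∀ j < cpos v, ∃ u, cidx u = cidx v ∧ cpos u = j) :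
    ∃ S : Fin k → List V,
      (∀ v : V, ∃! p : Fin k × ℕ, (S p.1)[p.2]? = some v) ∧
      (∀ i, List.Chain' (QEdge E cidx cpos) (S i)) ∧
      (∀ i v, v ∈ S i → cidx v = i) ∧
      (∀ v : V, (S (cidx v))[cpos v]? = some v) :=
  stmt13_general E cidx cpos hchan hinj hinit
end

section
/- Let Q be the compressed transitive closure graph of a DAG G with channel decomposition S_c. For any pair of vertices u, v such that v is reachable from u in G, there exists in Q either a path all of whose edges lie within a single channel (an mc-path), or a path consisting of an mc-path, followed by a single cross edge, followed by an mc-path (a dc-path), from u to v. -/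
section Aux

variable {V : Type*} {k : ℕ} {E : V → V → Prop}
    {cidx : V → Fin k} {cpos : V → ℕ}

lemma step_edge
    (hacyc : ∀ v, ¬ Relation.TransGen E v v)
    (hchan : ∀ a b, cidx a = cidx b → (cpos a < cpos b ↔ Relation.TransGen E a b))
    (hinj : ∀ a b, cidx a = cidx b → cpos a = cpos b → a = b)
    {a b : V} (hc : cidx a = cidx b) (hp : cpos b = cpos a + 1) :
    QEdge E cidx cpos a b := by
  have hab : Relation.TransGen E a b := (hchan a b hc).1 (by omega)
  refine ⟨⟨hab, ?_⟩, ?_⟩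
  · intro w hw hw2
    have : cpos a < cpos w := (hchan a w (hc.trans hw.symm)).2 hw2
    omega
  · intro u' hu' he
    by_contra h
    push_neg at h
    have hcb : cidx u' = cidx b := hu'.trans hc
    rcases lt_or_eq_of_le (show cpos b ≤ cpos u' by omega) with h1 | h1
    · exact hacyc b (((hchan b u' hcb.symm).1 h1).trans he.1)
    · have heq : u' = b := hinj u' b hcb h1.symm
      exact hacyc b (heq ▸ he.1)

lemma mc_path
    (hacyc : ∀ v, ¬ Relation.TransGen E v v)
    (hchan : ∀ a b, cidx a = cidx b → (cpos a < cpos b ↔ Relation.TransGen E a b))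
    (hinj : ∀ a b, cidx a = cidx b → cpos a = cpos b → a = b)
    (hinit : ∀ v, ∀ j < cpos v, ∃ u, cidx u = cidx v ∧ cpos u = j) :
    ∀ n, ∀ a b : V, cidx a = cidx b → cpos a + n = cpos b →
    Relation.ReflTransGen (fun x y => QEdge E cidx cpos x y ∧ cidx x = cidx y) a b := by
  intro n
  induction n with
  | zero =>
    intro a b hc hp
    have : a = b := hinj a b hc (by omega)
    exact this ▸ Relation.ReflTransGen.refl
  | succ n ih =>
    intro a b hc hp
    obtain ⟨c, hc1, hc2⟩ := hinit b (cpos a + n) (by omega)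
    have hac : cidx a = cidx c := hc.trans hc1.symm
    exact (ih a c hac (by omega)).tail
      ⟨step_edge hacyc hchan hinj hc1 (by omega), hc1⟩

lemma mc_path'
    (hacyc : ∀ v, ¬ Relation.TransGen E v v)
    (hchan : ∀ a b, cidx a = cidx b → (cpos a < cpos b ↔ Relation.TransGen E a b))
    (hinj : ∀ a b, cidx a = cidx b → cpos a = cpos b → a = b)
    (hinit : ∀ v, ∀ j < cpos v, ∃ u, cidx u = cidx v ∧ cpos u = j)
    {a b : V} (hc : cidx a = cidx b) (hp : cpos a ≤ cpos b) :
    Relation.ReflTransGen (fun x y => QEdge E cidx cpos x y ∧ cidx x = cidx y) a b :=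
  mc_path hacyc hchan hinj hinit (cpos b - cpos a) a b hc (by omega)

end Aux

/-- In the compressed transitive closure graph `Q`, for any vertices
`u`, `v` with `v` reachable from `u` in `G`, there is either an mc-path (a path of
`Q` staying inside one channel) or a dc-path (an mc-path, one cross edge, and an
mc-path) from `u` to `v`. -/
theorem stmt14 {V : Type*} [Fintype V] {k : ℕ} (E : V → V → Prop)
    (cidx : V → Fin k) (cpos : V → ℕ)
    (hacyc : ∀ v, ¬ Relation.TransGen E v v)
    (hchan : ∀ a b, cidx a = cidx b → (cpos a < cpos b ↔ Relation.TransGen E a b))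
    (hinj : ∀ a b, cidx a = cidx b → cpos a = cpos b → a = b)
    (hinit : ∀ v, ∀ j < cpos v, ∃ u, cidx u = cidx v ∧ cpos u = j) :
    ∀ u v, Relation.ReflTransGen E u v →
      (Relation.ReflTransGen (fun a b => QEdge E cidx cpos a b ∧ cidx a = cidx b) u v ∨
       ∃ a b, Relation.ReflTransGen (fun a' b' => QEdge E cidx cpos a' b' ∧ cidx a' = cidx b') u a ∧
         QEdge E cidx cpos a b ∧ cidx a ≠ cidx b ∧
         Relation.ReflTransGen (fun a' b' => QEdge E cidx cpos a' b' ∧ cidx a' = cidx b') b v) := by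
  classical
  intro u v huv
  by_cases hcc : cidx u = cidx v
  · -- same channel: mc-path
    left
    rcases Relation.reflTransGen_iff_eq_or_transGen.mp huv with h | h
    · exact h ▸ Relation.ReflTransGen.refl
    · exact mc_path' hacyc hchan hinj hinit hcc (le_of_lt ((hchan u v hcc).2 h))
  · -- different channels
    right
    -- candidates in u's channel, at/after u, still reaching v
    set S : Finset V :=
      Finset.univ.filter (fun w => cidx w = cidx u ∧ cpos u ≤ cpos w ∧ Relation.ReflTransGen E w v)
      with hS
    have huS : u ∈ S := by simp [hS, huv]
    obtain ⟨u', hu'S, hu'max⟩ := S.exists_max_image cpos ⟨u, huS⟩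
    simp only [hS, Finset.mem_filter, Finset.mem_univ, true_and] at hu'S
    obtain ⟨hu'c, hu'p, hu'v⟩ := hu'S
    have hu'ne : cidx u' ≠ cidx v := hu'c ▸ hcc
    have hu'vt : Relation.TransGen E u' v := by
      rcases Relation.reflTransGen_iff_eq_or_transGen.mp hu'v with h | h
      · exact absurd (congrArg cidx h) hu'ne.symm
      · exact h
    -- vertices in v's channel reachable from u'
    set T : Finset V :=
      Finset.univ.filter (fun w => cidx w = cidx v ∧ Relation.TransGen E u' w)
      with hT
    have hvT : v ∈ T := by simp [hT, hu'vt]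
    obtain ⟨v', hv'T, hv'min⟩ := T.exists_min_image cpos ⟨v, hvT⟩
    simp only [hT, Finset.mem_filter, Finset.mem_univ, true_and] at hv'T
    obtain ⟨hv'c, hv't⟩ := hv'T
    have hv'le : cpos v' ≤ cpos v := hv'min v (by simp [hT, hu'vt])
    have hEar : Earliest E cidx cpos u' v' := by
      refine ⟨hv't, ?_⟩
      intro w hw hw2
      exact hv'min w (by simp [hT, hw.trans hv'c, hw2])
    refine ⟨u', v', mc_path' hacyc hchan hinj hinit hu'c.symm hu'p, ⟨hEar, ?_⟩,
      hv'c ▸ hu'ne, mc_path' hacyc hchan hinj hinit hv'c hv'le⟩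
    -- latest: any u'' in u's channel with Earliest u'' v' has cpos ≤ cpos u'
    intro u'' hu'' he
    by_contra h
    push_neg at h
    have hu''v : Relation.ReflTransGen E u'' v := by
      refine he.1.to_reflTransGen.trans ?_
      rcases lt_or_eq_of_le hv'le with h1 | h1
      · exact ((hchan v' v hv'c).1 h1).to_reflTransGen
      · exact (hinj v' v hv'c h1) ▸ Relation.ReflTransGen.refl
    have : cpos u'' ≤ cpos u' :=
      hu'max u'' (by simp [hS, hu''.trans hu'c, hu''v]; omega)
    omega
end

section
/- The compressed transitive closure graph Q has the same reachability relation as G: for any vertices u, v, v is reachable from u in Q if and only if v is reachable from u in G. -/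
set_option linter.unusedSectionVars false


section Aux
variable {V : Type*} [Fintype V] {k : ℕ} (E : V → V → Prop)
    (cidx : V → Fin k) (cpos : V → ℕ)
    (hacyc : ∀ v, ¬ Relation.TransGen E v v)
    (hchan : ∀ a b, cidx a = cidx b → (cpos a < cpos b ↔ Relation.TransGen E a b))
    (hinj : ∀ a b, cidx a = cidx b → cpos a = cpos b → a = b)
    (hinit : ∀ v, ∀ j < cpos v, ∃ u, cidx u = cidx v ∧ cpos u = j)

include hchan in
lemma qstep (a n : V) (hc : cidx a = cidx n) (hp : cpos n = cpos a + 1) :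
    QEdge E cidx cpos a n := by
  have htg : Relation.TransGen E a n := (hchan a n hc).1 (by omega)
  refine ⟨⟨htg, fun w hw hwr => ?_⟩, fun u' hu' he => ?_⟩
  · have := (hchan a w (hc.trans hw.symm)).2 hwr
    omega
  · have := (hchan u' n (hu'.trans hc)).2 he.1
    omega

include hchan hinj hinit in
lemma chanpath : ∀ n a b, cidx a = cidx b → cpos a ≤ cpos b → cpos b - cpos a ≤ n →
    Relation.ReflTransGen (QEdge E cidx cpos) a b := by
  intro n
  induction n with
  | zero =>
    intro a b hc hle hd
    have : a = b := hinj a b hc (by omega)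
    exact this ▸ Relation.ReflTransGen.refl
  | succ n ih =>
    intro a b hc hle hd
    rcases eq_or_lt_of_le hle with heq | hlt
    · exact (hinj a b hc heq) ▸ Relation.ReflTransGen.refl
    · obtain ⟨m, hm, hmp⟩ : ∃ m, cidx m = cidx b ∧ cpos m = cpos a + 1 := by
        rcases eq_or_lt_of_le (Nat.succ_le_of_lt hlt) with h | h
        · exact ⟨b, rfl, h.symm⟩
        · exact hinit b _ h
      have hq := qstep E cidx cpos hchan a m (hc.trans hm.symm) hmp
      exact Relation.ReflTransGen.head hq (ih m b hm (by omega) (by omega))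
include hacyc hchan hinj hinit in
lemma qreach : ∀ u v, Relation.TransGen E u v →
    Relation.ReflTransGen (QEdge E cidx cpos) u v := by
  classical
  haveI : IsTrans V (fun x y => Relation.TransGen E y x) := ⟨fun a b c h1 h2 => h2.trans h1⟩
  haveI : IsIrrefl V (fun x y => Relation.TransGen E y x) := ⟨fun a h => hacyc a h⟩
  have wf : WellFounded (fun x y : V => Relation.TransGen E y x) :=
    Finite.wellFounded_of_trans_of_irrefl _
  intro u
  induction u using wf.induction with
  | _ u IH =>
  intro v hv
  -- earliest vertex of channel of v reachable from u
  obtain ⟨v', hv'mem, hv'min⟩ := (Finset.univ.filter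
      (fun w => cidx w = cidx v ∧ Relation.TransGen E u w)).exists_min_image cpos
      ⟨v, by simp [hv]⟩
  simp only [Finset.mem_filter, Finset.mem_univ, true_and] at hv'mem
  have hE : Earliest E cidx cpos u v' := ⟨hv'mem.2, fun w hw hwr => hv'min w (by simp [hv'mem.1 ▸ hw, hwr])⟩
  -- latest vertex of channel of u with Earliest · v'
  obtain ⟨u', hu'mem, hu'max⟩ := (Finset.univ.filter
      (fun w => cidx w = cidx u ∧ Earliest E cidx cpos w v')).exists_max_image cpos
      ⟨u, by simp [hE]⟩
  simp only [Finset.mem_filter, Finset.mem_univ, true_and] at hu'mem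
  have hQ : QEdge E cidx cpos u' v' :=
    ⟨hu'mem.2, fun w hw hwE => hu'max w (by simp [hu'mem.1 ▸ hw, hwE])⟩
  have h1 : Relation.ReflTransGen (QEdge E cidx cpos) u u' :=
    chanpath E cidx cpos hchan hinj hinit _ u u' hu'mem.1.symm
      (hu'max u (by simp [hE])) le_rfl
  have h2 : Relation.ReflTransGen (QEdge E cidx cpos) u v' := h1.tail hQ
  rcases eq_or_ne v' v with rfl | hne
  · exact h2
  · have hlt : cpos v' < cpos v := lt_of_le_of_ne (hv'min v (by simp [hv]))
      (fun h => hne (hinj v' v hv'mem.1 h))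
    have htg : Relation.TransGen E v' v := (hchan v' v hv'mem.1).1 hlt
    exact h2.trans (IH v' hE.1 v htg)

end Aux

/-- The compressed transitive closure graph `Q` has the same
reachability relation as `G`. -/
theorem stmt15 {V : Type*} [Fintype V] {k : ℕ} (E : V → V → Prop)
    (cidx : V → Fin k) (cpos : V → ℕ)
    (hacyc : ∀ v, ¬ Relation.TransGen E v v)
    (hchan : ∀ a b, cidx a = cidx b → (cpos a < cpos b ↔ Relation.TransGen E a b))
    (hinj : ∀ a b, cidx a = cidx b → cpos a = cpos b → a = b)
    (hinit : ∀ v, ∀ j < cpos v, ∃ u, cidx u = cidx v ∧ cpos u = j) :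
    ∀ u v, Relation.ReflTransGen (QEdge E cidx cpos) u v ↔ Relation.ReflTransGen E u v := by
  intro u v
  constructor
  · intro h
    induction h with
    | refl => exact Relation.ReflTransGen.refl
    | tail _ e ih => exact ih.trans e.1.1.to_reflTransGen
  · intro h
    rcases (Relation.reflTransGen_iff_eq_or_transGen).1 h with rfl | htg
    · exact Relation.ReflTransGen.refl
    · exact qreach E cidx cpos hacyc hchan hinj hinit u v htg
end

section
/- For a DAG G with n vertices, the compressed transitive closure (the collection of lists L_v for all v ∈ V) can be stored in O(nk) space, where k is the number of channels in the channel decomposition, and it determines the full transitive closure of G: w is reachable from v in G if and only if L_v contains a vertex w' in the same channel as w with w' preceding or equal to w in the channel order. -/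
/-- The compressed transitive closure (the lists `L v`, with at most
one entry per channel: the earliest vertex of that channel reachable from `v`) can
be stored in `O(nk)` space, and it determines the full transitive closure of `G`:
`w` is reachable from `v` iff `L v` contains a vertex `w'` of `w`'s channel
preceding or equal to `w` in the channel order. -/
theorem stmt18 {V : Type*} [Fintype V] {k : ℕ} (E : V → V → Prop)
    (cidx : V → Fin k) (cpos : V → ℕ)
    (hchan : ∀ a b, cidx a = cidx b → (Relation.ReflTransGen E a b ↔ cpos a ≤ cpos b))
    (hinj : ∀ a b, cidx a = cidx b → cpos a = cpos b → a = b)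
    (L : V → Fin k → Option V)
    (hL : ∀ v i w', L v i = some w' ↔
      (cidx w' = i ∧ Relation.ReflTransGen E v w' ∧
        ∀ w, cidx w = i → Relation.ReflTransGen E v w → cpos w' ≤ cpos w)) :
    Set.ncard {p : V × Fin k | (L p.1 p.2).isSome} ≤ Fintype.card V * k ∧
    (∀ v w, Relation.ReflTransGen E v w ↔
      ∃ w', L v (cidx w) = some w' ∧ cpos w' ≤ cpos w) := by
  constructor
  · calc Set.ncard {p : V × Fin k | (L p.1 p.2).isSome}
        ≤ Set.ncard (Set.univ : Set (V × Fin k)) :=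
          Set.ncard_le_ncard (Set.subset_univ _) Set.finite_univ
      _ = Fintype.card V * k := by
          simp [Set.ncard_univ, Nat.card_eq_fintype_card, Fintype.card_prod]
  · intro v w
    constructor
    · intro hvw
      have hne : ({x | cidx x = cidx w ∧ Relation.ReflTransGen E v x} : Set V).Nonempty :=
        ⟨w, rfl, hvw⟩
      obtain ⟨w', ⟨hw'i, hw'r⟩, hmin⟩ :=
        Set.exists_min_image _ cpos (Set.toFinite _) hne
      refine ⟨w', (hL v (cidx w) w').2 ⟨hw'i, hw'r, ?_⟩, hmin w ⟨rfl, hvw⟩⟩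
      intro x hx hvx
      exact hmin x ⟨hx, hvx⟩
    · rintro ⟨w', hsome, hle⟩
      obtain ⟨hi, hr, -⟩ := (hL v (cidx w) w').1 hsome
      exact hr.trans ((hchan w' w hi).2 hle)
end
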